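/- arXiv:2008.00793 — 4 statements merged into one kernel-verified Lean document; each statement's English description precedes it below -/
import Mathlib

section
/- With Q^*_n = max(Q_n, WL) where WL is the water level for (Q, a), the vector Q^* satisfies: (1) sum_n Q^*_n = sum_n Q_n + a; (2) Q^*_n >= Q_n for all n; (3) for any other vector R with R_n >= Q_n for all n and sum_n R_n = sum_n Q_n + a, the maximum of R is at least the maximum of Q^*. -/
/-- Properties of the water-filling outcome `Q*_n = max (Q n) WL`:
mass conservation, monotonicity, and minimality of the maximum queue. -/
theorem water_filling_properties (N : ℕ) [NeZero N] (Q : Fin N → ℝ)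
    (hQ : ∀ n, 0 ≤ Q n) (a : ℝ) (ha : 0 < a) (WL : ℝ)
    (hWL : ∑ n, max 0 (WL - Q n) = a) :
    (∑ n, max (Q n) WL = (∑ n, Q n) + a) ∧
    (∀ n, Q n ≤ max (Q n) WL) ∧
    (∀ R : Fin N → ℝ, (∀ n, Q n ≤ R n) → (∑ n, R n = (∑ n, Q n) + a) →
      (Finset.univ.sup' Finset.univ_nonempty fun n => max (Q n) WL) ≤
        Finset.univ.sup' Finset.univ_nonempty R) := by
  have hkey : ∀ n, max (Q n) WL = Q n + max 0 (WL - Q n) := by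
    intro n
    rcases le_total WL (Q n) with h | h
    · rw [max_eq_left h, max_eq_left (by linarith)]; ring
    · rw [max_eq_right h, max_eq_right (by linarith)]; ring
  refine ⟨?_, fun n => le_max_left _ _, ?_⟩
  · simp_rw [hkey, Finset.sum_add_distrib, hWL]
  · intro R hR hsum
    have hWLle : ∃ n, WL ≤ R n := by
      by_contra h
      push_neg at h
      have hlt : ∑ n, (R n - Q n) < ∑ n, max 0 (WL - Q n) := by
        apply Finset.sum_lt_sum_of_nonempty Finset.univ_nonempty
        intro i _
        have := h i
        have := hR i
        have : R i - Q i < WL - Q i := by linarith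
        exact lt_of_lt_of_le this (le_max_right _ _)
      rw [hWL, Finset.sum_sub_distrib, hsum] at hlt
      linarith
    obtain ⟨n₀, hn₀⟩ := hWLle
    apply Finset.sup'_le
    intro n _
    apply max_le
    · exact le_trans (hR n) (Finset.le_sup' R (Finset.mem_univ n))
    · exact le_trans hn₀ (Finset.le_sup' R (Finset.mem_univ n₀))
end

section
/- The water-filling outcome Q^* minimizes the Euclidean norm: for any vector R in R^N with R_n >= Q_n for all n and sum_n (R_n - Q_n) = a, we have ||Q^*||_2 <= ||R||_2, with equality only if R = Q^*. -/
/-- The water-filling outcome `Q*_n = max (Q n) WL` minimizes the Euclidean norm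
among all feasible allocations `R` of `a` units, with equality only for `R = Q*`. -/
theorem water_filling_min_norm (N : ℕ) (Q : Fin N → ℝ) (hQ : ∀ n, 0 ≤ Q n)
    (a : ℝ) (ha : 0 < a) (WL : ℝ) (hWL : ∑ n, max 0 (WL - Q n) = a)
    (R : Fin N → ℝ) (hR : ∀ n, Q n ≤ R n) (hRsum : ∑ n, (R n - Q n) = a) :
    Real.sqrt (∑ n, (max (Q n) WL)^2) ≤ Real.sqrt (∑ n, (R n)^2) ∧
    (Real.sqrt (∑ n, (max (Q n) WL)^2) = Real.sqrt (∑ n, (R n)^2) →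
      R = fun n => max (Q n) WL) := by
  set Qs : Fin N → ℝ := fun n => max (Q n) WL with hQs
  -- ∑ (Qs n - Q n) = a
  have hQsQ : ∑ n, (Qs n - Q n) = a := by
    rw [← hWL]
    apply Finset.sum_congr rfl
    intro n _
    simp only [hQs]
    rcases le_total (Q n) WL with h | h
    · rw [max_eq_right h, max_eq_right (by linarith)]
    · rw [max_eq_left h, max_eq_left (by linarith)]; ring
  -- ∑ (R n - Qs n) = 0
  have hsum0 : ∑ n, (R n - Qs n) = 0 := by
    have : ∑ n, (R n - Qs n) = (∑ n, (R n - Q n)) - ∑ n, (Qs n - Q n) := by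
      rw [← Finset.sum_sub_distrib]; apply Finset.sum_congr rfl; intros; ring
    rw [this, hRsum, hQsQ]; ring
  -- cross term nonneg
  have hcross : 0 ≤ ∑ n, Qs n * (R n - Qs n) := by
    have hge : ∀ n ∈ Finset.univ, WL * (R n - Qs n) ≤ Qs n * (R n - Qs n) := by
      intro n _
      rcases le_total (Q n) WL with h | h
      · simp only [hQs]; rw [max_eq_right h]
      · have h1 : Qs n = Q n := max_eq_left h
        have h2 : 0 ≤ R n - Qs n := by rw [h1]; linarith [hR n]
        have h3 : WL ≤ Qs n := le_max_right _ _
        exact mul_le_mul_of_nonneg_right h3 h2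
    calc (0:ℝ) = WL * ∑ n, (R n - Qs n) := by rw [hsum0]; ring
    _ = ∑ n, WL * (R n - Qs n) := by rw [Finset.mul_sum]
    _ ≤ ∑ n, Qs n * (R n - Qs n) := Finset.sum_le_sum hge
  -- main decomposition
  have hdecomp : ∑ n, (R n)^2 =
      (∑ n, (Qs n)^2) + 2 * (∑ n, Qs n * (R n - Qs n)) + ∑ n, (R n - Qs n)^2 := by
    calc ∑ n, (R n)^2
        = ∑ n, ((Qs n)^2 + 2*(Qs n * (R n - Qs n)) + (R n - Qs n)^2) :=
          Finset.sum_congr rfl (fun n _ => by ring)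
      _ = _ := by rw [Finset.sum_add_distrib, Finset.sum_add_distrib, ← Finset.mul_sum]
  have hsqnn : 0 ≤ ∑ n, (R n - Qs n)^2 := Finset.sum_nonneg fun n _ => sq_nonneg _
  have hle : ∑ n, (Qs n)^2 ≤ ∑ n, (R n)^2 := by rw [hdecomp]; linarith
  have hQsnn : 0 ≤ ∑ n, (Qs n)^2 := Finset.sum_nonneg fun n _ => sq_nonneg _
  constructor
  · exact Real.sqrt_le_sqrt hle
  · intro heq
    have heq2 : ∑ n, (Qs n)^2 = ∑ n, (R n)^2 := by
      exact (Real.sqrt_inj hQsnn (hQsnn.trans hle)).mp heq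
    have hz : ∑ n, (R n - Qs n)^2 ≤ 0 := by
      nlinarith [hdecomp, hcross]
    have hall : ∀ n ∈ Finset.univ, (R n - Qs n)^2 = 0 := by
      intro n hn
      have := Finset.sum_nonneg (fun m (_ : m ∈ Finset.univ) => sq_nonneg (R m - Qs m))
      have hsum_eq : ∑ n, (R n - Qs n)^2 = 0 := le_antisymm hz hsqnn
      exact (Finset.sum_eq_zero_iff_of_nonneg (fun m _ => sq_nonneg _)).mp hsum_eq n hn
    funext n
    have := hall n (Finset.mem_univ n)
    have : R n - Qs n = 0 := by
      exact pow_eq_zero_iff (by norm_num) |>.mp this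
    simp only [hQs] at *
    linarith
end

section
/- It is NP-hard to decide, given initial queue lengths Q and arrival vector (a^(1),...,a^(M)), whether the unsplittable dispatching problem with two servers admits an assignment achieving E||Q^* - Qbar||_2^2 = 0. Concretely: given natural numbers l_1,...,l_M, deciding whether they can be partitioned into two subsets of equal sum is equivalent to deciding whether, with two initially empty queues and dispatcher m holding l_m jobs to send unsplit to one server, the squared L2 distance to the water-filling target (a/2, a/2) can be made zero, where a = sum_m l_m. -/
open Finset

theorem exists_bool_split_iff_exists_finset {α : Type*} [Fintype α] [DecidableEq α]
    (P : Finset α → Finset α → Prop) :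
    (∃ f : α → Bool, P (univ.filter fun a => f a = true) (univ.filter fun a => f a = false)) ↔
      ∃ S : Finset α, P S Sᶜ := by
  constructor
  · rintro ⟨f, hf⟩
    refine ⟨univ.filter fun a => f a = true, ?_⟩
    convert hf using 2
    ext
    simp
  · rintro ⟨S, hS⟩
    refine ⟨fun a => decide (a ∈ S), ?_⟩
    convert hS using 2 <;> ext <;> simp

theorem sq_sub_half_add_sq_sub_half_eq_zero_iff {K : Type*} [Field K] [NeZero (2 : K)]
    (x y : K) : (x - (x + y) / 2) ^ 2 + (y - (x + y) / 2) ^ 2 = 0 ↔ x = y := by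
  have h : (x - (x + y) / 2) ^ 2 + (y - (x + y) / 2) ^ 2 = (x - y) ^ 2 / 2 := by
    field_simp
    ring
  rw [h, div_eq_zero_iff, or_iff_left two_ne_zero, sq_eq_zero_iff, sub_eq_zero]

/-- Two-server unsplittable dispatching: the squared L2 distance of the final
queues to the water-filling target `(a/2, a/2)` can be made zero by some
(deterministic) assignment of the batches `l m` to the two servers iff the
multiset `{l m}` admits a partition into two equal-sum parts (PARTITION). -/
theorem two_server_zero_distance_iff_partition (M : ℕ) (l : Fin M → ℕ) :
    (∃ f : Fin M → Bool,
      ((∑ m ∈ Finset.univ.filter fun m => f m = true, (l m : ℝ))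
          - (∑ m, (l m : ℝ))/2)^2 +
      ((∑ m ∈ Finset.univ.filter fun m => f m = false, (l m : ℝ))
          - (∑ m, (l m : ℝ))/2)^2 = 0)
    ↔ (∃ S : Finset (Fin M), ∑ m ∈ S, l m = ∑ m ∈ Sᶜ, l m) := by
  refine (exists_bool_split_iff_exists_finset (fun A B =>
    (∑ m ∈ A, (l m : ℝ) - (∑ m, (l m : ℝ)) / 2) ^ 2 +
      (∑ m ∈ B, (l m : ℝ) - (∑ m, (l m : ℝ)) / 2) ^ 2 = 0)).trans (exists_congr fun S => ?_)
  rw [← sum_add_sum_compl S, sq_sub_half_add_sq_sub_half_eq_zero_iff]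
  exact_mod_cast Iff.rfl
end

section
/- In the unsplittable TWF derivation, let U = {n : Q_n < WL'} where WL' is the water level for (Q, (M-1)*c) with c = a^(m) > 0 and M >= 2, and let g^*_n be the water-filling increments for (Q, M*c). Then for every n in U, g^*_n > (c - sum_{n' not in U} g^*_{n'}) / |U|, and for every n not in U, g^*_n <= (c - sum_{n' not in U} g^*_{n'}) / |U|. Consequently p_n = max(0, (g^*_n - (c - sum_{n' not in U} g^*_{n'})/|U|) / ((M-1)c)) is strictly positive exactly on U. -/
/-! Filling from level `WL'` up to `WL` raises every server below `WL'` by exactly `WL - WL'`,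
so the extra `c` units are `|U| (WL - WL')` plus what lands on the servers outside `U`.
Hence the threshold `T` is the level gap `WL - WL'` itself. A server in `U` gets more than the
gap, since it starts below `WL'`; a server outside `U` starts at or above `WL'` and gets at most
the gap. -/

open Finset

namespace WaterFilling

variable {ι : Type*} [Fintype ι] (Q : ι → ℝ)

theorem lt_of_sum_max_sub_lt {a b : ℝ}
    (h : ∑ n, max 0 (a - Q n) < ∑ n, max 0 (b - Q n)) : a < b := by
  by_contra! hba
  exact h.not_ge (sum_le_sum fun n _ => max_le_max le_rfl (sub_le_sub_right hba _))

variable {Q} {s : Finset ι} {w : ℝ}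

theorem sum_max_sub_eq_sum_below (hs : ∀ n, n ∈ s ↔ Q n < w) :
    ∑ n, max 0 (w - Q n) = ∑ n ∈ s, (w - Q n) := by
  rw [← sum_subset (subset_univ s) fun n _ hn => max_eq_left (by linarith [(hs n).not.1 hn])]
  exact sum_congr rfl fun n hn => max_eq_right (by linarith [(hs n).1 hn])

theorem nonempty_below_of_sum_max_sub_pos (hs : ∀ n, n ∈ s ↔ Q n < w)
    (hpos : 0 < ∑ n, max 0 (w - Q n)) : s.Nonempty :=
  nonempty_of_sum_ne_zero (sum_max_sub_eq_sum_below hs ▸ hpos.ne')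

theorem sum_max_sub_eq_card_mul_add [DecidableEq ι] {w' : ℝ} (hs : ∀ n, n ∈ s ↔ Q n < w')
    (hw : w' ≤ w) :
    ∑ n, max 0 (w - Q n) =
      #s * (w - w') + ∑ n, max 0 (w' - Q n) + ∑ n ∈ sᶜ, max 0 (w - Q n) := by
  have hbelow : ∑ n ∈ s, max 0 (w - Q n) = ∑ n ∈ s, ((w - w') + (w' - Q n)) :=
    sum_congr rfl fun n hn => by rw [max_eq_right (by linarith [(hs n).1 hn])]; ring
  rw [← sum_add_sum_compl s, hbelow, sum_add_distrib, sum_const, nsmul_eq_mul,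
    sum_max_sub_eq_sum_below hs]

end WaterFilling

theorem zero_lt_max_zero_div_iff {x d : ℝ} (hd : 0 < d) : 0 < max 0 (x / d) ↔ 0 < x := by
  rw [lt_max_iff, div_pos_iff_of_pos_right hd]
  exact or_iff_right (lt_irrefl 0)

open WaterFilling in
theorem uTWF_support_general (N M : ℕ) (hM : 2 ≤ M) (Q : Fin N → ℝ)
    (c : ℝ) (hc : 0 < c) (WL' WL : ℝ)
    (hWL' : ∑ n, max 0 (WL' - Q n) = ((M:ℝ) - 1) * c)
    (hWL : ∑ n, max 0 (WL - Q n) = (M:ℝ) * c)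
    (g : Fin N → ℝ) (hg : g = fun n => max (Q n) WL - Q n)
    (U : Finset (Fin N)) (hU : U = Finset.univ.filter fun n => Q n < WL')
    (T : ℝ) (hT : T = (c - ∑ n ∈ Uᶜ, g n) / (U.card : ℝ)) :
    (∀ n ∈ U, T < g n) ∧ (∀ n ∉ U, g n ≤ T) ∧
    (∀ n, 0 < max 0 ((g n - T) / (((M:ℝ)-1)*c)) ↔ n ∈ U) := by
  have hMc : 0 < ((M:ℝ) - 1) * c :=
    mul_pos (by linarith [show (2:ℝ) ≤ M by exact_mod_cast hM]) hc
  have hs : ∀ n, n ∈ U ↔ Q n < WL' := by simp [hU]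
  have hgap : WL' < WL := lt_of_sum_max_sub_lt Q (by rw [hWL', hWL]; linarith)
  have hcard : (0:ℝ) < #U := by
    exact_mod_cast (nonempty_below_of_sum_max_sub_pos hs (hWL' ▸ hMc)).card_pos
  have hgn : ∀ n, g n = max 0 (WL - Q n) := fun n => by
    simp only [hg, ← max_sub_sub_right, sub_self]
  have hTgap : T = WL - WL' := by
    have hsplit := sum_max_sub_eq_card_mul_add hs hgap.le
    rw [hWL, hWL'] at hsplit
    rw [hT, div_eq_iff hcard.ne', sum_congr rfl fun n _ => hgn n]
    linarith
  have hlower : ∀ n ∈ U, T < g n := fun n hn => by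
    rw [hgn, hTgap]
    exact lt_max_of_lt_right (by linarith [(hs n).1 hn])
  have hupper : ∀ n ∉ U, g n ≤ T := fun n hn => by
    rw [hgn, hTgap]
    exact max_le (by linarith) (by linarith [not_lt.1 ((hs n).not.1 hn)])
  refine ⟨hlower, hupper, fun n => ?_⟩
  rw [zero_lt_max_zero_div_iff hMc, sub_pos]
  exact ⟨fun hlt => by_contra fun hn => (hupper n hn).not_gt hlt, hlower n⟩

/-- Support lemma of the unsplittable TWF derivation: with `U` the set of servers
strictly below the water level for `(M-1)c` arrivals and `g` the water-filling
increments for `Mc` arrivals, the threshold `T = (c - ∑_{n∉U} g n)/|U|` separates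
`U` from its complement, and the uTWF probability is strictly positive exactly
on `U`. -/
theorem uTWF_support (N M : ℕ) (hM : 2 ≤ M) (Q : Fin N → ℝ) (hQ : ∀ n, 0 ≤ Q n)
    (c : ℝ) (hc : 0 < c) (WL' WL : ℝ)
    (hWL' : ∑ n, max 0 (WL' - Q n) = ((M:ℝ) - 1) * c)
    (hWL : ∑ n, max 0 (WL - Q n) = (M:ℝ) * c)
    (g : Fin N → ℝ) (hg : g = fun n => max (Q n) WL - Q n)
    (U : Finset (Fin N)) (hU : U = Finset.univ.filter fun n => Q n < WL')
    (T : ℝ) (hT : T = (c - ∑ n ∈ Uᶜ, g n) / (U.card : ℝ)) :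
    (∀ n ∈ U, T < g n) ∧ (∀ n ∉ U, g n ≤ T) ∧
    (∀ n, 0 < max 0 ((g n - T) / (((M:ℝ)-1)*c)) ↔ n ∈ U) :=
  uTWF_support_general N M hM Q c hc WL' WL hWL' hWL g hg U hU T hT
end
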